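/- arXiv:2605.14613 — 2 statements merged into one kernel-verified Lean document; each statement's English description precedes it below -/
import Mathlib

section
/- Let k ≥ 2 and n ≥ 0, and let X = {Ψ̂(u) : u ∈ ℱ_{n,k} and u contains no letter 0}. Then every element of X is maximal in (ℱ*_{n,k}, ≤): if x ∈ X, y ∈ ℱ*_{n,k} and x ≤ y coordinatewise, then x = y. -/
/-- The `k`-Fibonacci numbers: `F_{0,k} = 0`, `F_{1,k} = 1`,
`F_{n,k} = k·F_{n-1,k} + F_{n-2,k}`. -/
def kFib (k : ℕ) : ℕ → ℕ
  | 0 => 0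
  | 1 => 1
  | n + 2 => k * kFib k (n + 1) + kFib k n

/-- `k`-generalized Pell strings: strings over the alphabet `{0,…,k}` in which every
maximal run of the letter `k` has even length (equivalently, elements of the monoid
generated by `0,…,k-1` and `kk`). -/
inductive GenPell (k : ℕ) : List ℕ → Prop
  | nil : GenPell k []
  | cons (i : ℕ) (s : List ℕ) : i < k → GenPell k s → GenPell k (i :: s)
  | kk (s : List ℕ) : GenPell k s → GenPell k (k :: k :: s)

/-- Vertices of the Munarini graph `M_{n,k}`: `k`-generalized Pell strings of length `n`. -/
abbrev PellVtx (n k : ℕ) := {s : List ℕ // s.length = n ∧ GenPell k s}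

/-- Elementary Munarini move: replace one `0` by some `i ∈ {1,…,k-1}`, or replace a
substring `00` by `kk`. -/
def munariniRel (k : ℕ) (u v : List ℕ) : Prop :=
  (∃ a b : List ℕ, ∃ i : ℕ, 0 < i ∧ i < k ∧ u = a ++ 0 :: b ∧ v = a ++ i :: b) ∨
  (∃ a b : List ℕ, u = a ++ 0 :: 0 :: b ∧ v = a ++ k :: k :: b)

/-- The Munarini graph `M_{n,k}`. -/
def MunariniGraph (n k : ℕ) : SimpleGraph (PellVtx n k) :=
  SimpleGraph.fromRel fun u v => munariniRel k u.val v.val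

/-- Elementary move of the generalized Pell graph: replace one `i ∈ {0,…,k-2}` by `i+1`,
or replace a substring `(k-1)(k-1)` by `kk`. -/
def piRel (k : ℕ) (u v : List ℕ) : Prop :=
  (∃ a b : List ℕ, ∃ i : ℕ, i < k - 1 ∧ u = a ++ i :: b ∧ v = a ++ (i + 1) :: b) ∨
  (∃ a b : List ℕ, u = a ++ (k - 1) :: (k - 1) :: b ∧ v = a ++ k :: k :: b)

/-- The generalized Pell graph `Π_{n,k}`. -/
def PiGraph (n k : ℕ) : SimpleGraph (PellVtx n k) :=
  SimpleGraph.fromRel fun u v => piRel k u.val v.val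

/-- Two binary strings differ in exactly one coordinate (oriented version: `u` has a `false`
where `v` has a `true`, all other coordinates agree). -/
def diffOne (u v : List Bool) : Prop :=
  ∃ a b : List Bool, u = a ++ false :: b ∧ v = a ++ true :: b

/-- The hypercube `Q_m` on binary strings of length `m`; two strings are adjacent iff
they differ in exactly one coordinate. -/
def QCube (m : ℕ) : SimpleGraph {s : List Bool // s.length = m} :=
  SimpleGraph.fromRel fun u v => diffOne u.val v.val

/-- A Fibonacci string: a binary string with no two consecutive `true`s. -/
def FibStr (s : List Bool) : Prop := List.Chain' (fun a b => ¬(a = true ∧ b = true)) s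

/-- The Fibonacci cube `Γ_m`: the subgraph of `Q_m` induced by Fibonacci strings. -/
def FibCube (m : ℕ) : SimpleGraph {s : List Bool // s.length = m ∧ FibStr s} :=
  SimpleGraph.fromRel fun u v => diffOne u.val v.val

/-- The binary block `A_i` of length `k`: `A_0 = 0^k` and `A_i = 0^{i-1} 1 0^{k-i}`
for `1 ≤ i ≤ k`. -/
def blockA (k i : ℕ) : List Bool :=
  if i = 0 then List.replicate k false
  else List.replicate (i - 1) false ++ true :: List.replicate (k - i) false

/-- Munarini strings: concatenations of blocks `A_0,…,A_k` in which every block `A_k`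
is immediately followed by a block `A_0`. -/
inductive MunariniStr (k : ℕ) : List Bool → Prop
  | nil : MunariniStr k []
  | block (i : ℕ) (s : List Bool) : i < k → MunariniStr k s →
      MunariniStr k (blockA k i ++ s)
  | kblock (s : List Bool) : MunariniStr k s →
      MunariniStr k (blockA k k ++ (blockA k 0 ++ s))

/-- Vertices of `Γ*_{n,k}`: Munarini strings of length `k·n`. -/
abbrev MunStrVtx (n k : ℕ) := {s : List Bool // s.length = k * n ∧ MunariniStr k s}

/-- `Γ*_{n,k}`: the subgraph of the hypercube `Q_{kn}` induced by Munarini strings. -/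
def GammaStar (n k : ℕ) : SimpleGraph (MunStrVtx n k) :=
  SimpleGraph.fromRel fun u v => diffOne u.val v.val

/-- The map `Ψ̂`, replacing each letter `i ∈ {0,…,k-1}` by the block `A_i` and each
substring `kk` by `A_k A_0`. -/
def psi (k : ℕ) : List ℕ → List Bool
  | [] => []
  | [i] => blockA k i
  | i :: j :: s =>
      if i = k then blockA k k ++ (blockA k 0 ++ psi k s)
      else blockA k i ++ psi k (j :: s)

/-- Coordinatewise majority of three binary strings. -/
def maj3 : List Bool → List Bool → List Bool → List Bool
  | a :: u, b :: v, c :: w => ((a && b) || (a && c) || (b && c)) :: maj3 u v w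
  | _, _, _ => []

/-- The weight of a `(k+1)`-ary string: `w(u) = Σ_{i=1}^{k-1} |u|_i + |u|_k / 2`. -/
def pweight (k : ℕ) (u : List ℕ) : ℕ :=
  u.countP (fun a => decide (0 < a ∧ a < k)) + u.count k / 2

/-- Words over `{0,…,2k}` where every maximal run of `0`s and every maximal run of `1`s
has even length. -/
inductive EvenRuns01 (k : ℕ) : List ℕ → Prop
  | nil : EvenRuns01 k []
  | cons (i : ℕ) (s : List ℕ) : 2 ≤ i → i ≤ 2 * k → EvenRuns01 k s → EvenRuns01 k (i :: s)
  | zz (s : List ℕ) : EvenRuns01 k s → EvenRuns01 k (0 :: 0 :: s)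
  | oo (s : List ℕ) : EvenRuns01 k s → EvenRuns01 k (1 :: 1 :: s)

/-- The number of maximal induced hypercubes of dimension `p` in a graph `G`:
vertex subsets inducing a subgraph isomorphic to `Q_p` that are not properly contained
in any vertex subset inducing a hypercube. -/
noncomputable def maxCubeCount {V : Type} (G : SimpleGraph V) (p : ℕ) : ℕ :=
  {S : Set V | Nonempty (G.induce S ≃g QCube p) ∧
      ∀ T : Set V, S ⊆ T → (∃ q : ℕ, Nonempty (G.induce T ≃g QCube q)) → T = S}.ncard

lemma blockA_length' (k i : ℕ) (h : i ≤ k) : (blockA k i).length = k := by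
  unfold blockA; split
  · simp
  · simp; omega

lemma blockA_get_iff (k i : ℕ) (hi : i ≤ k) (m : ℕ) (hm : m < (blockA k i).length) :
    (blockA k i)[m] = true ↔ (1 ≤ i ∧ m = i - 1) := by
  have hmk : m < k := blockA_length' k i hi ▸ hm
  unfold blockA at hm ⊢
  rcases Nat.eq_zero_or_pos i with rfl | hpos
  · simp at hm ⊢
  · simp only [if_neg (show ¬ i = 0 by omega)] at hm ⊢
    rcases lt_trichotomy m (i - 1) with h | h | h
    · rw [List.getElem_append_left (by simpa using h)]
      simp; omega
    · subst h
      rw [List.getElem_append_right (by simp)]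
      simp; omega
    · rw [List.getElem_append_right (by simp; omega), List.getElem_cons]
      rw [dif_neg (by simp; omega)]
      simp; omega

lemma forall2_append_split {α β : Type*} {R : α → β → Prop} :
    ∀ {a : List α} {b : List β} {x : List α} {y : List β},
    List.Forall₂ R (a ++ x) (b ++ y) → a.length = b.length →
    List.Forall₂ R a b ∧ List.Forall₂ R x y := by
  intro a
  induction a with
  | nil => intro b x y h hl
           rw [List.length_nil] at hl
           rw [List.eq_nil_of_length_eq_zero hl.symm] at h ⊢
           exact ⟨List.Forall₂.nil, h⟩
  | cons c a ih =>
      intro b x y h hl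
      cases b with
      | nil => simp at hl
      | cons d b =>
          simp only [List.cons_append] at h
          cases h with
          | cons hcd ht =>
              obtain ⟨h1, h2⟩ := ih ht (by simpa using hl)
              exact ⟨List.Forall₂.cons hcd h1, h2⟩

lemma block_dominated (k i j : ℕ) (h1 : 1 ≤ i) (h2 : i ≤ k) (hj : j ≤ k)
    (hle : List.Forall₂ (· ≤ ·) (blockA k i) (blockA k j)) : j = i := by
  obtain ⟨hl, hget⟩ := List.forall₂_iff_get.mp hle
  have hik : i - 1 < (blockA k i).length := by rw [blockA_length' k i h2]; omega
  have hjk : i - 1 < (blockA k j).length := by rw [← hl]; exact hik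
  have htrue : (blockA k i)[i-1] = true := (blockA_get_iff k i h2 _ hik).mpr ⟨h1, rfl⟩
  have := hget (i-1) hik hjk
  simp only [List.get_eq_getElem, htrue] at this
  have : (blockA k j)[i-1] = true := by
    cases hb : (blockA k j)[i-1]'hjk
    · rw [hb] at this; exact absurd this (by simp)
    · rfl
  have := (blockA_get_iff k j hj _ hjk).mp this
  omega

lemma psi_cons (k i : ℕ) (s : List ℕ) (h : i ≠ k) :
    psi k (i :: s) = blockA k i ++ psi k s := by
  cases s with
  | nil => simp [psi]
  | cons j t => simp [psi, h]

lemma psi_aux (k : ℕ) (hk : 2 ≤ k) :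
    ∀ {u : List ℕ}, GenPell k u → 0 ∉ u → ∀ {y : List Bool}, MunariniStr k y →
    List.Forall₂ (· ≤ ·) (psi k u) y → psi k u = y := by
  intro u hpell
  induction hpell with
  | nil =>
      intro _ y hmy hle
      simp only [psi] at hle ⊢
      cases hle; rfl
  | cons i s hi hs ih =>
      intro h0 y hmy hle
      have hi1 : 1 ≤ i := by
        rcases Nat.eq_zero_or_pos i with rfl | h
        · exact absurd (List.mem_cons_self : 0 ∈ 0 :: s) h0
        · exact h
      have h0s : 0 ∉ s := fun h => h0 (List.mem_cons_of_mem _ h)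
      rw [psi_cons k i s (by omega)] at hle ⊢
      cases hmy with
      | nil =>
          have := hle.length_eq
          simp [blockA_length' k i (le_of_lt hi)] at this
          omega
      | block j t hj hmt =>
          obtain ⟨hb, ht⟩ := forall2_append_split hle
            (by rw [blockA_length' k i (le_of_lt hi), blockA_length' k j (le_of_lt hj)])
          have : j = i := block_dominated k i j hi1 (le_of_lt hi) (le_of_lt hj) hb
          subst this
          rw [ih h0s hmt ht]
      | kblock t hmt =>
          rw [← List.append_assoc] at hle
          obtain ⟨hb, ht⟩ := forall2_append_split
            (by rw [List.append_assoc] at hle; exact hle)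
            (by rw [blockA_length' k i (le_of_lt hi), blockA_length' k k le_rfl])
          have : k = i := block_dominated k i k hi1 (le_of_lt hi) le_rfl hb
          omega
  | kk s hs ih =>
      intro h0 y hmy hle
      have h0s : 0 ∉ s := fun h => h0 (List.mem_cons_of_mem _ (List.mem_cons_of_mem _ h))
      have hpsi : psi k (k :: k :: s) = blockA k k ++ (blockA k 0 ++ psi k s) := by
        simp [psi]
      rw [hpsi] at hle ⊢
      cases hmy with
      | nil =>
          have := hle.length_eq
          simp [blockA_length' k k le_rfl] at this
          omega
      | block j t hj hmt =>
          obtain ⟨hb, ht⟩ := forall2_append_split hle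
            (by rw [blockA_length' k k le_rfl, blockA_length' k j (le_of_lt hj)])
          have : j = k := block_dominated k k j (by omega) le_rfl (le_of_lt hj) hb
          omega
      | kblock t hmt =>
          obtain ⟨hb, ht⟩ := forall2_append_split hle
            (by rw [blockA_length' k k le_rfl])
          obtain ⟨hb0, ht0⟩ := forall2_append_split ht (by rfl)
          rw [ih h0s hmt ht0]

/-- Every element of `X = {Ψ̂(u) : u ∈ ℱ_{n,k}, u has no letter 0}` is maximal
among Munarini strings of length `k·n` for the coordinatewise order. -/
theorem psi_maximal (k n : ℕ) (hk : 2 ≤ k) (u : List ℕ)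
    (hlen : u.length = n) (hpell : GenPell k u) (h0 : 0 ∉ u)
    (y : List Bool) (hy : y.length = k * n) (hmy : MunariniStr k y)
    (hle : List.Forall₂ (· ≤ ·) (psi k u) y) :
    psi k u = y := by
  exact psi_aux k hk hpell h0 hmy hle
end

section
/- For every k ≥ 1, n ≥ 0 and every vertex u of the Munarini graph M_{n,k}, the graph distance from u to the all-zero string 0^n equals the weight of u: d_{M_{n,k}}(u, 0^n) = Σ_{i=1}^{k−1} |u|_i + |u|_k/2. -/
lemma pweight_cons_aux (hk : 1 ≤ k) (i : ℕ) (hik : i < k) (s : List ℕ) :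
    pweight k (i :: s) = pweight k s + (if 0 < i then 1 else 0) := by
  have h1 : i ≠ k := Nat.ne_of_lt hik
  by_cases h0 : 0 < i
  · simp [pweight, List.countP_cons, List.count_cons, h1, h0, hik]; omega
  · simp [pweight, List.countP_cons, List.count_cons, h1, h0]

lemma pweight_kk (hk : 1 ≤ k) (s : List ℕ) :
    pweight k (k :: k :: s) = pweight k s + 1 := by
  have h1 : ¬ (0 < k ∧ k < k) := by omega
  simp [pweight, List.countP_cons, List.count_cons, h1]
  omega

lemma pweight_rel (hk : 1 ≤ k) {u v : List ℕ} (h : munariniRel k u v) :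
    pweight k v = pweight k u + 1 := by
  rcases h with ⟨a, b, i, hi0, hik, hu, hv⟩ | ⟨a, b, hu, hv⟩
  · subst hu; subst hv
    have h1 : i ≠ k := Nat.ne_of_lt hik
    have h0 : (0:ℕ) ≠ k := by omega
    have hcond : (0 < i ∧ i < k) := ⟨hi0, hik⟩
    have h00 : ¬ ((0:ℕ) < 0 ∧ (0:ℕ) < k) := by omega
    simp [pweight, List.countP_append, List.countP_cons, List.count_append,
      List.count_cons, h1, h0, hcond, h00, hi0, hik]
    omega
  · subst hu; subst hv
    have h0 : (0:ℕ) ≠ k := by omega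
    have h00 : ¬ ((0:ℕ) < 0 ∧ (0:ℕ) < k) := by omega
    have hkk : ¬ (0 < k ∧ k < k) := by omega
    simp [pweight, List.countP_append, List.countP_cons, List.count_append,
      List.count_cons, h0, h00, hkk]
    omega

lemma munariniRel_length {u v : List ℕ} (h : munariniRel k u v) :
    u.length = v.length := by
  rcases h with ⟨a, b, i, _, _, hu, hv⟩ | ⟨a, b, hu, hv⟩ <;> subst hu <;> subst hv <;> simp

lemma munariniRel_cons (x : ℕ) {u v : List ℕ} (h : munariniRel k u v) :
    munariniRel k (x :: u) (x :: v) := by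
  rcases h with ⟨a, b, i, h1, h2, hu, hv⟩ | ⟨a, b, hu, hv⟩
  · exact Or.inl ⟨x :: a, b, i, h1, h2, by simp [hu], by simp [hv]⟩
  · exact Or.inr ⟨x :: a, b, by simp [hu], by simp [hv]⟩

lemma pweight_zero_eq_replicate (hk : 1 ≤ k) {s : List ℕ} (hs : GenPell k s)
    (h : pweight k s = 0) : s = List.replicate s.length 0 := by
  induction hs with
  | nil => simp
  | cons i s hik hs ih =>
      rw [pweight_cons_aux hk i hik] at h
      have hi : i = 0 := by by_contra hne; simp [Nat.pos_of_ne_zero hne] at h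
      subst hi
      simp only [List.length_cons, List.replicate_succ, List.cons.injEq, true_and]
      exact ih (by omega)
  | kk s hs ih => rw [pweight_kk hk] at h; omega

lemma exists_move (hk : 1 ≤ k) {s : List ℕ} (hs : GenPell k s)
    (h : 0 < pweight k s) :
    ∃ t, GenPell k t ∧ munariniRel k t s := by
  induction hs with
  | nil => simp [pweight] at h
  | cons i s hik hs ih =>
      by_cases hi : 0 < i
      · exact ⟨0 :: s, GenPell.cons 0 s (by omega) hs,
          Or.inl ⟨[], s, i, hi, hik, rfl, rfl⟩⟩
      · have hi0 : i = 0 := by omega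
        subst hi0
        rw [pweight_cons_aux hk 0 hik] at h
        simp at h
        obtain ⟨t, ht, hrel⟩ := ih h
        exact ⟨0 :: t, GenPell.cons 0 t (by omega) ht, munariniRel_cons 0 hrel⟩
  | kk s hs ih =>
      exact ⟨0 :: 0 :: s,
        GenPell.cons 0 _ (by omega) (GenPell.cons 0 _ (by omega) hs),
        Or.inr ⟨[], s, rfl, rfl⟩⟩

lemma pweight_replicate_zero (hk : 1 ≤ k) (n : ℕ) :
    pweight k (List.replicate n 0) = 0 := by
  have h0 : (0:ℕ) ≠ k := by omega
  simp [pweight, List.count_replicate, h0, List.countP_eq_zero.2]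

lemma walk_lower' {n k : ℕ} (hk : 1 ≤ k) :
    ∀ {a b : PellVtx n k} (W : (MunariniGraph n k).Walk a b),
      pweight k a.val ≤ pweight k b.val + W.length := by
  intro a b W
  induction W with
  | nil => simp
  | @cons a b c hab W ih =>
      have h1 : pweight k a.val ≤ pweight k b.val + 1 := by
        rcases hab.2 with h | h
        · rw [pweight_rel hk h]; omega
        · rw [pweight_rel hk h]
      rw [SimpleGraph.Walk.length_cons]
      omega

lemma walk_lower {n k : ℕ} (hk : 1 ≤ k) {z : PellVtx n k}
    (hz : z.val = List.replicate n 0) :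
    ∀ {a : PellVtx n k} (W : (MunariniGraph n k).Walk a z),
      pweight k a.val ≤ W.length := by
  intro a W
  have := walk_lower' hk W
  rw [hz, pweight_replicate_zero hk] at this
  omega

lemma walk_upper {n k : ℕ} (hk : 1 ≤ k) {z : PellVtx n k}
    (hz : z.val = List.replicate n 0) :
    ∀ (m : ℕ) (u : PellVtx n k), pweight k u.val = m →
      ∃ W : (MunariniGraph n k).Walk u z, W.length = m := by
  intro m
  induction m with
  | zero =>
      intro u hu
      have h2 := pweight_zero_eq_replicate hk u.prop.2 hu
      rw [u.prop.1] at h2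
      have : u = z := Subtype.ext (h2.trans hz.symm)
      subst this
      exact ⟨SimpleGraph.Walk.nil, rfl⟩
  | succ m ih =>
      intro u hu
      obtain ⟨t, ht, hrel⟩ := exists_move hk u.prop.2 (by omega)
      have hlen : t.length = n := by rw [munariniRel_length hrel, u.prop.1]
      set v : PellVtx n k := ⟨t, hlen, ht⟩ with hv
      have hpw : pweight k u.val = pweight k t + 1 := pweight_rel hk hrel
      have hne : u ≠ v := by
        intro he
        rw [he] at hpw
        simp [hv] at hpw
      have hadj : (MunariniGraph n k).Adj u v :=
        ⟨hne, Or.inr hrel⟩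
      obtain ⟨W, hW⟩ := ih v (by simp [hv]; omega)
      exact ⟨SimpleGraph.Walk.cons hadj W, by simp [hW]⟩

/-- in `M_{n,k}`, the distance from a vertex `u` to the all-zero string `0^n`
equals the weight of `u`. -/
theorem munarini_dist_eq_weight (k n : ℕ) (hk : 1 ≤ k) (u : PellVtx n k) :
    ∀ z : PellVtx n k, z.val = List.replicate n 0 →
      (MunariniGraph n k).dist u z = pweight k u.val := by
  intro z hz
  obtain ⟨W, hW⟩ := walk_upper hk hz (pweight k u.val) u rfl
  have hle : (MunariniGraph n k).dist u z ≤ pweight k u.val :=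
    hW ▸ SimpleGraph.dist_le W
  have hreach : (MunariniGraph n k).Reachable u z := ⟨W⟩
  obtain ⟨P, hP⟩ := hreach.exists_walk_length_eq_dist
  have hge : pweight k u.val ≤ (MunariniGraph n k).dist u z :=
    hP ▸ walk_lower hk hz P
  omega
end
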